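/- arXiv:1612.09368 — 3 statements merged into one kernel-verified Lean document; each statement's English description precedes it below -/
import Mathlib

section
/- Inserting a single edge <u,v> into a graph G increases the core number of any vertex by at most 1. -/
open SimpleGraph

/-- The core number of a vertex: the largest `k` such that the vertex lies in a
subgraph of `G` with minimum degree at least `k`. -/
noncomputable def coreNumber {V : Type*} (G : SimpleGraph V) (v : V) : ℕ :=
  sSup {k : ℕ | ∃ H : G.Subgraph, v ∈ H.verts ∧ ∀ w ∈ H.verts, k ≤ (H.neighborSet w).ncard}

/-!
Deleting the edges outside `G` from a subgraph of `G ⊔ K` keeps its vertices and costs each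
vertex at most its `K`-degree. So if `K` has maximum degree `d`, a subgraph of `G ⊔ K` of minimum
degree `k` yields a subgraph of `G` of minimum degree `k - d` on the same vertices. A single
edge has maximum degree `1`.
-/

section

variable {V : Type*}

lemma le_coreNumber [Finite V] {G : SimpleGraph V} {v : V} {k : ℕ} (H : G.Subgraph)
    (hv : v ∈ H.verts) (hk : ∀ w ∈ H.verts, k ≤ (H.neighborSet w).ncard) :
    k ≤ coreNumber G v := by
  refine le_csSup ⟨Nat.card V, ?_⟩ ⟨H, hv, hk⟩
  rintro m ⟨H', hv', hm⟩
  exact (hm v hv').trans (Set.ncard_le_card _)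

lemma coreNumber_le {G : SimpleGraph V} {v : V} {n : ℕ}
    (h : ∀ (k : ℕ) (H : G.Subgraph), v ∈ H.verts →
      (∀ w ∈ H.verts, k ≤ (H.neighborSet w).ncard) → k ≤ n) :
    coreNumber G v ≤ n :=
  csSup_le' fun _ ⟨H, hv, hk⟩ ↦ h _ H hv hk

lemma SimpleGraph.Subgraph.neighborSet_subset_comap_sup_left {G K : SimpleGraph V}
    (H : (G ⊔ K).Subgraph) (x : V) :
    H.neighborSet x ⊆ (H.comap (Hom.ofLE le_sup_left)).neighborSet x ∪ K.neighborSet x := by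
  intro y hy
  rcases H.adj_sub hy with hG | hK
  · exact Or.inl ⟨hG, hy⟩
  · exact Or.inr hK

theorem coreNumber_sup_le_add [Finite V] (G K : SimpleGraph V) {d : ℕ}
    (hK : ∀ x, (K.neighborSet x).ncard ≤ d) (w : V) :
    coreNumber (G ⊔ K) w ≤ coreNumber G w + d := by
  refine coreNumber_le fun k H hw hk ↦ ?_
  have hrestrict : k - d ≤ coreNumber G w := by
    refine le_coreNumber (H.comap (Hom.ofLE le_sup_left)) hw fun x hx ↦ ?_
    have hdeg := calc
      k ≤ (H.neighborSet x).ncard := hk x hx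
      _ ≤ ((H.comap (Hom.ofLE le_sup_left)).neighborSet x ∪ K.neighborSet x).ncard :=
        Set.ncard_le_ncard (H.neighborSet_subset_comap_sup_left x)
      _ ≤ ((H.comap (Hom.ofLE le_sup_left)).neighborSet x).ncard + d :=
        (Set.ncard_union_le _ _).trans (Nat.add_le_add_left (hK x) _)
    omega
  omega

lemma ncard_neighborSet_edge_le_one (u v x : V) : ((edge u v).neighborSet x).ncard ≤ 1 := by
  have hsub : ((edge u v).neighborSet x).Subsingleton := fun y hy z hz ↦ by
    simp only [mem_neighborSet, edge_adj] at hy hz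
    grind
  exact (Set.ncard_le_one hsub.finite).2 hsub

end

theorem coreNumber_insert_edge_le_general {V : Type*} [Fintype V] (G : SimpleGraph V) (u v : V)
    (w : V) :
    coreNumber (G ⊔ fromEdgeSet {s(u,v)}) w ≤ coreNumber G w + 1 :=
  -- `edge u v` is by definition `fromEdgeSet {s(u, v)}`
  coreNumber_sup_le_add G (edge u v) (ncard_neighborSet_edge_le_one u v) w

theorem coreNumber_insert_edge_le {V : Type*} [Fintype V] (G : SimpleGraph V) (u v : V)
    (huv : u ≠ v) (he : s(u,v) ∉ G.edgeSet) (w : V) :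
    coreNumber (G ⊔ fromEdgeSet {s(u,v)}) w ≤ coreNumber G w + 1 :=
  coreNumber_insert_edge_le_general G u v w
end

section
/- If a k-superior edge set E_k is inserted into a graph G, then for every vertex v with core_G(v) = k, the core number of v increases by at most 1. -/
/-!
Suppose `v` lay in a subgraph `H` of `G ⊔ fromEdgeSet S` of minimum degree `k + 2`. Every vertex
of `H` whose core number in `G` is at most `k` is an endpoint of at most one new edge, so it keeps
degree at least `k + 1` after the new edges are dropped from `H`; every other vertex lies in the
`(k + 1)`-core of `G`. Hence the old edges of `H` together with the `(k + 1)`-core of `G` form a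
subgraph of `G` of minimum degree `k + 1` containing `v`, contradicting `coreNumber G v = k`.
-/

open SimpleGraph

/-- `S` is a `k`-superior edge set of new edges with respect to `G`. -/
def IsKSuperiorInsertSet {V : Type*} (G : SimpleGraph V) (k : ℕ) (S : Set (Sym2 V)) : Prop :=
  (∀ e ∈ S, e ∉ G.edgeSet ∧ ∃ u v : V, u ≠ v ∧ e = s(u,v) ∧
      coreNumber G u = k ∧ coreNumber G u ≤ coreNumber G v) ∧
  ∀ e₁ ∈ S, ∀ e₂ ∈ S, e₁ ≠ e₂ → ∀ u : V, u ∈ e₁ → u ∈ e₂ → k < coreNumber G u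

namespace SimpleGraph

variable {V : Type*} {G : SimpleGraph V}

namespace Subgraph

def MinDegreeAtLeast (H : G.Subgraph) (k : ℕ) : Prop :=
  ∀ w ∈ H.verts, k ≤ (H.neighborSet w).ncard

lemma MinDegreeAtLeast.mono {H : G.Subgraph} {k m : ℕ} (h : H.MinDegreeAtLeast m) (hkm : k ≤ m) :
    H.MinDegreeAtLeast k :=
  fun w hw => hkm.trans (h w hw)

variable [Finite V]

lemma ncard_neighborSet_mono {H H' : G.Subgraph} (h : H ≤ H') (w : V) :
    (H.neighborSet w).ncard ≤ (H'.neighborSet w).ncard :=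
  Set.ncard_le_ncard (neighborSet_subset_of_subgraph h w)

lemma minDegreeAtLeast_iSup {ι : Sort*} {H : ι → G.Subgraph} {k : ℕ}
    (h : ∀ i, (H i).MinDegreeAtLeast k) : (⨆ i, H i).MinDegreeAtLeast k := by
  intro w hw
  obtain ⟨i, hi⟩ := Set.mem_iUnion.1 (by simpa only [verts_iSup] using hw)
  exact (h i w hi).trans (ncard_neighborSet_mono (le_iSup H i) w)

lemma MinDegreeAtLeast.sup_of_forall_notMem {A B : G.Subgraph} {k : ℕ}
    (hB : B.MinDegreeAtLeast k) (hA : ∀ w ∈ A.verts, w ∉ B.verts → k ≤ (A.neighborSet w).ncard) :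
    (A ⊔ B).MinDegreeAtLeast k := by
  intro w hw
  by_cases hwB : w ∈ B.verts
  · exact (hB w hwB).trans (ncard_neighborSet_mono le_sup_right w)
  · exact (hA w (hw.resolve_right hwB) hwB).trans (ncard_neighborSet_mono le_sup_left w)

lemma ncard_neighborSet_le_comap_add {G' : SimpleGraph V} (H : (G ⊔ G').Subgraph) (w : V) :
    (H.neighborSet w).ncard ≤
      ((H.comap (Hom.ofLE le_sup_left)).neighborSet w).ncard + (G'.neighborSet w).ncard := by
  refine (Set.ncard_le_ncard ?_).trans (Set.ncard_union_le _ _)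
  intro x hx
  rcases H.adj_sub hx with hG | hG'
  · exact Or.inl ⟨hG, hx⟩
  · exact Or.inr hG'

end Subgraph

open Subgraph

lemma ncard_neighborSet_fromEdgeSet_le_one [Finite V] {S : Set (Sym2 V)} {w : V}
    (h : ∀ e₁ ∈ S, ∀ e₂ ∈ S, w ∈ e₁ → w ∈ e₂ → e₁ = e₂) :
    ((fromEdgeSet S).neighborSet w).ncard ≤ 1 := by
  refine (Set.ncard_le_one_iff).2 fun {a b} ha hb => ?_
  rw [mem_neighborSet, fromEdgeSet_adj] at ha hb
  exact Sym2.congr_right.1 (h _ ha.1 _ hb.1 (Sym2.mem_mk_left w a) (Sym2.mem_mk_left w b))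

lemma le_coreNumber_iff [Finite V] {v : V} {k : ℕ} :
    k ≤ coreNumber G v ↔ ∃ H : G.Subgraph, v ∈ H.verts ∧ H.MinDegreeAtLeast k := by
  have hne : {m : ℕ | ∃ H : G.Subgraph, v ∈ H.verts ∧ H.MinDegreeAtLeast m}.Nonempty :=
    ⟨0, G.singletonSubgraph v, rfl, fun _ _ => Nat.zero_le _⟩
  have hbdd : BddAbove {m : ℕ | ∃ H : G.Subgraph, v ∈ H.verts ∧ H.MinDegreeAtLeast m} :=
    ⟨Nat.card V, fun _ ⟨H, hv, hH⟩ => (hH v hv).trans (Set.ncard_le_card _)⟩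
  constructor
  · intro hk
    obtain ⟨H, hv, hH⟩ := Nat.sSup_mem hne hbdd
    exact ⟨H, hv, hH.mono hk⟩
  · exact le_csSup hbdd

def coreSubgraph (G : SimpleGraph V) (k : ℕ) : G.Subgraph :=
  ⨆ H : {H : G.Subgraph // H.MinDegreeAtLeast k}, H.1

lemma minDegreeAtLeast_coreSubgraph [Finite V] {k : ℕ} : (G.coreSubgraph k).MinDegreeAtLeast k :=
  minDegreeAtLeast_iSup fun H => H.2

lemma mem_coreSubgraph_verts [Finite V] {v : V} {k : ℕ} :
    v ∈ (G.coreSubgraph k).verts ↔ k ≤ coreNumber G v := by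
  simp only [coreSubgraph, verts_iSup, Set.mem_iUnion, Subtype.exists, le_coreNumber_iff]
  tauto

end SimpleGraph

theorem kSuperiorInsert_core_increase_le_one {V : Type*} [Fintype V] (G : SimpleGraph V)
    (k : ℕ) (S : Set (Sym2 V)) (hS : IsKSuperiorInsertSet G k S)
    (v : V) (hv : coreNumber G v = k) :
    coreNumber (G ⊔ fromEdgeSet S) v ≤ k + 1 := by
  by_contra! hlt
  obtain ⟨H, hvH, hH⟩ := le_coreNumber_iff.1 (Nat.succ_le_of_lt hlt)
  set H₀ : G.Subgraph := H.comap (Hom.ofLE le_sup_left)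
  have hH₀ : ∀ w ∈ H.verts, coreNumber G w ≤ k → k + 1 ≤ (H₀.neighborSet w).ncard := by
    intro w hw hwk
    -- two distinct new edges at `w` would force `k < coreNumber G w`
    have hSw : ((fromEdgeSet S).neighborSet w).ncard ≤ 1 :=
      ncard_neighborSet_fromEdgeSet_le_one fun e₁ he₁ e₂ he₂ h₁ h₂ =>
        by_contra fun hne => (hS.2 e₁ he₁ e₂ he₂ hne w h₁ h₂).not_ge hwk
    have hHw : k + 2 ≤ (H₀.neighborSet w).ncard + ((fromEdgeSet S).neighborSet w).ncard :=
      (hH w hw).trans (H.ncard_neighborSet_le_comap_add w)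
    omega
  have hJ : (H₀ ⊔ G.coreSubgraph (k + 1)).MinDegreeAtLeast (k + 1) :=
    minDegreeAtLeast_coreSubgraph.sup_of_forall_notMem fun w hw hwK =>
      hH₀ w hw (not_lt.1 fun hwk => hwK (mem_coreSubgraph_verts.2 hwk))
  have hcore : k + 1 ≤ coreNumber G v := le_coreNumber_iff.2 ⟨H₀ ⊔ G.coreSubgraph (k + 1), Or.inl hvH, hJ⟩
  omega
end

section
/- In any superior edge set, each vertex is an endpoint of at most one edge that is a superior edge for it (i.e., each vertex u is incident to at most one edge <u,v> in the set with core_G(v) ≥ core_G(u)). -/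
open SimpleGraph

/-- `S` is a `k`-superior edge set with respect to `G` (edges may or may not be in `G`). -/
def IsKSuperiorEdgeSet {V : Type*} (G : SimpleGraph V) (k : ℕ) (S : Set (Sym2 V)) : Prop :=
  (∀ e ∈ S, ∃ u v : V, e = s(u,v) ∧
      coreNumber G u = k ∧ coreNumber G u ≤ coreNumber G v) ∧
  ∀ e₁ ∈ S, ∀ e₂ ∈ S, e₁ ≠ e₂ → ∀ u : V, u ∈ e₁ → u ∈ e₂ → k < coreNumber G u

namespace IsKSuperiorEdgeSet

variable {V : Type*} {G : SimpleGraph V} {k : ℕ} {S : Set (Sym2 V)}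

theorem coreNumber_eq_of_superior (hS : IsKSuperiorEdgeSet G k S) {u v : V}
    (he : s(u, v) ∈ S) (hle : coreNumber G u ≤ coreNumber G v) :
    coreNumber G u = k := by
  obtain ⟨a, b, hab, hka, hab'⟩ := hS.1 _ he
  rcases Sym2.eq_iff.mp hab with ⟨rfl, rfl⟩ | ⟨rfl, rfl⟩ <;> omega

theorem eq_of_superior_of_mem (hS : IsKSuperiorEdgeSet G k S) {u v₁ v₂ : V}
    (h₁ : s(u, v₁) ∈ S) (hle₁ : coreNumber G u ≤ coreNumber G v₁)
    (h₂ : s(u, v₂) ∈ S) : s(u, v₁) = s(u, v₂) := by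
  by_contra hne
  have hlt := hS.2 _ h₁ _ h₂ hne u (Sym2.mem_mk_left u v₁) (Sym2.mem_mk_left u v₂)
  have hcore := hS.coreNumber_eq_of_superior h₁ hle₁
  omega

end IsKSuperiorEdgeSet

theorem superiorEdgeSet_at_most_one_superior_edge_general {V : Type*} (G : SimpleGraph V)
    (ks : Finset ℕ) (F : ℕ → Set (Sym2 V))
    (hF : ∀ k ∈ ks, IsKSuperiorEdgeSet G k (F k))
    (S : Set (Sym2 V)) (hS : S = ⋃ k ∈ ks, F k) :
    ∀ u : V, ∀ e₁ ∈ S, ∀ e₂ ∈ S,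
      (∃ v : V, e₁ = s(u,v) ∧ coreNumber G u ≤ coreNumber G v) →
      (∃ v : V, e₂ = s(u,v) ∧ coreNumber G u ≤ coreNumber G v) →
      e₁ = e₂ := by
  rintro u e₁ he₁ e₂ he₂ ⟨v₁, rfl, hle₁⟩ ⟨v₂, rfl, hle₂⟩
  subst hS
  simp only [Set.mem_iUnion] at he₁ he₂
  obtain ⟨k₁, hk₁, he₁⟩ := he₁
  obtain ⟨k₂, hk₂, he₂⟩ := he₂
  have hk : k₁ = k₂ :=
    ((hF k₁ hk₁).coreNumber_eq_of_superior he₁ hle₁).symm.trans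
      ((hF k₂ hk₂).coreNumber_eq_of_superior he₂ hle₂)
  subst hk
  exact (hF k₁ hk₁).eq_of_superior_of_mem he₁ hle₁ he₂

theorem superiorEdgeSet_at_most_one_superior_edge {V : Type*} [Fintype V] (G : SimpleGraph V)
    (ks : Finset ℕ) (F : ℕ → Set (Sym2 V))
    (hF : ∀ k ∈ ks, IsKSuperiorEdgeSet G k (F k))
    (S : Set (Sym2 V)) (hS : S = ⋃ k ∈ ks, F k) :
    ∀ u : V, ∀ e₁ ∈ S, ∀ e₂ ∈ S,
      (∃ v : V, e₁ = s(u,v) ∧ coreNumber G u ≤ coreNumber G v) →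
      (∃ v : V, e₂ = s(u,v) ∧ coreNumber G u ≤ coreNumber G v) →
      e₁ = e₂ :=
  superiorEdgeSet_at_most_one_superior_edge_general G ks F hF S hS
end
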